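/- Let (b,c,d) be a triad in the real Cayley–Dickson algebra 𝔸ₙ (all εᵢ = 1). Then the Moufang identity d·(b·(d·c)) = ((d·b)·d)·c holds if and only if [b,c,d] ≠ 0; and the Moufang identity b·(d·(c·d)) = ((b·d)·c)·d holds if and only if [c,b,d] ≠ 0. -/

import Mathlib

noncomputable section

/-- The real Cayley–Dickson algebra carrier: `CD 0 = ℝ`, `CD (n+1) = CD n × CD n`. -/
def CD : ℕ → Type
  | 0 => ℝ
  | n + 1 => CD n × CD n

instance CD.instAddCommGroup : (n : ℕ) → AddCommGroup (CD n)
  | 0 => inferInstanceAs (AddCommGroup ℝ)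
  | n + 1 =>
    letI := CD.instAddCommGroup n
    inferInstanceAs (AddCommGroup (CD n × CD n))

instance CD.instModule : (n : ℕ) → Module ℝ (CD n)
  | 0 => inferInstanceAs (Module ℝ ℝ)
  | n + 1 =>
    letI := CD.instModule n
    inferInstanceAs (Module ℝ (CD n × CD n))

/-- The unit of the Cayley–Dickson algebra. -/
def CD.one : (n : ℕ) → CD n
  | 0 => (1 : ℝ)
  | n + 1 => (CD.one n, 0)

/-- Conjugation: `(a, b)* = (a*, -b)`, identity on `ℝ`. -/
def CD.conj : (n : ℕ) → CD n → CD n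
  | 0, a => a
  | n + 1, x => (CD.conj n x.1, -x.2)

/-- Cayley–Dickson multiplication with sign vector `ε`:
`(a,b)·(c,d) = (a·c − ε (n+1) • (d*·b), d·a + b·c*)`. -/
def CD.mul (ε : ℕ → ℝ) : (n : ℕ) → CD n → CD n → CD n
  | 0, a, c => (show ℝ from a) * (show ℝ from c)
  | n + 1, x, y =>
    (CD.mul ε n x.1 y.1 - ε (n + 1) • CD.mul ε n (CD.conj n y.2) x.2,
     CD.mul ε n y.2 x.1 + CD.mul ε n x.2 (CD.conj n y.1))

/-- The standard basis element `e α` of `CD n`, for `α ⊆ {1,…,n}`. -/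
def CD.basis : (n : ℕ) → Finset ℕ → CD n
  | 0, _ => (1 : ℝ)
  | n + 1, α =>
    if n + 1 ∈ α then ((0 : CD n), CD.basis n (α.erase (n + 1)))
    else (CD.basis n α, (0 : CD n))

/-- `α` indexes a pure basis element of `CD n`. -/
def CD.IsPure (n : ℕ) (α : Finset ℕ) : Prop :=
  α.Nonempty ∧ α ⊆ Finset.Icc 1 n

/-- The associator `[x,y,z] = (x·y)·z − x·(y·z)`. -/
def CD.assoc (ε : ℕ → ℝ) (n : ℕ) (x y z : CD n) : CD n :=
  CD.mul ε n (CD.mul ε n x y) z - CD.mul ε n x (CD.mul ε n y z)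

/-- A triad: indices of three pairwise distinct pure basis elements `b, c, d`
with `d ≠ ±(b·c)` (all signs `εᵢ = 1`). -/
def CD.IsTriad (n : ℕ) (α β γ : Finset ℕ) : Prop :=
  CD.IsPure n α ∧ CD.IsPure n β ∧ CD.IsPure n γ ∧
  α ≠ β ∧ α ≠ γ ∧ β ≠ γ ∧
  CD.basis n γ ≠ CD.mul (fun _ => 1) n (CD.basis n α) (CD.basis n β) ∧
  CD.basis n γ ≠ -CD.mul (fun _ => 1) n (CD.basis n α) (CD.basis n β)

/-- Multiplication with all signs `εᵢ = 1`. -/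
abbrev CD.mul1 (n : ℕ) : CD n → CD n → CD n := CD.mul (fun _ => 1) n

/-- Associator with all signs `εᵢ = 1`. -/
abbrev CD.assoc1 (n : ℕ) : CD n → CD n → CD n → CD n := CD.assoc (fun _ => 1) n

/-!
Products of basis elements are signed basis elements, `e α · e β = ± e (α ∆ β)`, and for a pure
basis element `e` (for which `e* = -e`) left and right multiplication by `e` square to `-1`.
Distinct pure basis elements anticommute, since their product is again pure and conjugation
reverses products. For a triad put `u = (b c) d` and `v = b (c d)`: these rules turn `d (b (d c))`
into `-d v` and `((d b) d) c` into `b c = d u`, so the first identity says `d (u + v) = 0`, that is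
`u = -v`. As `u` and `v` are both `± e (α ∆ β ∆ γ)`, this happens exactly when `u ≠ v`, i.e. when
`[b, c, d] ≠ 0`. The second identity is the mirror image, with `u = (c b) d`, `v = c (b d)` and
right multiplication by `d`.
-/

namespace CD

variable {ε : ℕ → ℝ} {n : ℕ}

-- An anonymous pair `(a, b)` has type `CD n × CD n`, which is not reducibly `CD (n + 1)`:
-- rewriting with lemmas about `CD (n + 1)` fails on it, so pairs are built with `mk`.
def mk (a b : CD n) : CD (n + 1) := (a, b)

lemma ext {x y : CD (n + 1)} (h₁ : x.1 = y.1) (h₂ : x.2 = y.2) : x = y := Prod.ext h₁ h₂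

section Pair

variable (x y : CD (n + 1)) (a b c d : CD n) (s : ℝ)

@[simp] lemma fst_mk : (mk a b).1 = a := rfl
@[simp] lemma snd_mk : (mk a b).2 = b := rfl

@[simp] lemma fst_add : (x + y).1 = x.1 + y.1 := rfl
@[simp] lemma snd_add : (x + y).2 = x.2 + y.2 := rfl
@[simp] lemma fst_neg : (-x).1 = -x.1 := rfl
@[simp] lemma snd_neg : (-x).2 = -x.2 := rfl
@[simp] lemma fst_smul : (s • x).1 = s • x.1 := rfl
@[simp] lemma snd_smul : (s • x).2 = s • x.2 := rfl
@[simp] lemma fst_conj : (conj (n + 1) x).1 = conj n x.1 := rfl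
@[simp] lemma snd_conj : (conj (n + 1) x).2 = -x.2 := rfl

@[simp] lemma fst_mul :
    (mul ε (n + 1) x y).1 = mul ε n x.1 y.1 - ε (n + 1) • mul ε n (conj n y.2) x.2 := rfl

@[simp] lemma snd_mul : (mul ε (n + 1) x y).2 = mul ε n y.2 x.1 + mul ε n x.2 (conj n y.1) :=
  rfl

lemma conj_mk : conj (n + 1) (mk a b) = mk (conj n a) (-b) := rfl

lemma mk_mul_mk :
    mul ε (n + 1) (mk a b) (mk c d)
      = mk (mul ε n a c - ε (n + 1) • mul ε n (conj n d) b) (mul ε n d a + mul ε n b (conj n c)) :=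
  rfl

end Pair

lemma conj_add (x y : CD n) : conj n (x + y) = conj n x + conj n y := by
  induction n with
  | zero => rfl
  | succ n ih => exact ext (by simp [ih]) (by simp [add_comm])

lemma conj_smul (s : ℝ) (x : CD n) : conj n (s • x) = s • conj n x := by
  induction n with
  | zero => rfl
  | succ n ih => exact ext (by simp [ih]) (by simp)

def conjₗ (n : ℕ) : CD n →ₗ[ℝ] CD n where
  toFun := conj n
  map_add' := conj_add
  map_smul' := conj_smul

lemma conj_zero : conj n (0 : CD n) = 0 := map_zero (conjₗ n)
lemma conj_neg (x : CD n) : conj n (-x) = -conj n x := map_neg (conjₗ n) x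
lemma conj_sub (x y : CD n) : conj n (x - y) = conj n x - conj n y := map_sub (conjₗ n) x y

@[simp] lemma conj_conj (x : CD n) : conj n (conj n x) = x := by
  induction n with
  | zero => rfl
  | succ n ih => exact ext (by simp [ih]) (by simp)

-- The explicit `(n := n)` lets structural recursion see the decreasing argument.
mutual

protected lemma add_mul : ∀ {n : ℕ} (x y z : CD n), mul ε n (x + y) z = mul ε n x z + mul ε n y z
  | 0, x, y, z => add_mul (show ℝ from x) y z
  | n + 1, x, y, z =>
    ext (by simp [CD.add_mul (n := n), CD.mul_add (n := n)]; abel)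
      (by simp [CD.add_mul (n := n), CD.mul_add (n := n)]; abel)

protected lemma mul_add : ∀ {n : ℕ} (x y z : CD n), mul ε n x (y + z) = mul ε n x y + mul ε n x z
  | 0, x, y, z => mul_add (show ℝ from x) y z
  | n + 1, x, y, z =>
    ext (by simp [CD.add_mul (n := n), CD.mul_add (n := n), conj_add]; abel)
      (by simp [CD.add_mul (n := n), CD.mul_add (n := n), conj_add]; abel)

end

mutual

protected lemma smul_mul : ∀ {n : ℕ} (s : ℝ) (x y : CD n), mul ε n (s • x) y = s • mul ε n x y
  | 0, s, x, y => smul_mul_assoc s (show ℝ from x) y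
  | n + 1, s, x, y =>
    ext (by simp [CD.smul_mul (n := n), CD.mul_smul (n := n), smul_sub, smul_comm s])
      (by simp [CD.smul_mul (n := n), CD.mul_smul (n := n)])

protected lemma mul_smul : ∀ {n : ℕ} (s : ℝ) (x y : CD n), mul ε n x (s • y) = s • mul ε n x y
  | 0, s, x, y => mul_smul_comm s (show ℝ from x) y
  | n + 1, s, x, y =>
    ext (by simp [CD.smul_mul (n := n), CD.mul_smul (n := n), conj_smul, smul_sub, smul_comm s])
      (by simp [CD.smul_mul (n := n), CD.mul_smul (n := n), conj_smul])

end

variable (ε n) in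
def mulₗ : CD n →ₗ[ℝ] CD n →ₗ[ℝ] CD n :=
  LinearMap.mk₂ ℝ (mul ε n) CD.add_mul CD.smul_mul CD.mul_add CD.mul_smul

protected lemma zero_mul (x : CD n) : mul ε n 0 x = 0 := LinearMap.map_zero₂ (mulₗ ε n) x
protected lemma mul_zero (x : CD n) : mul ε n x 0 = 0 := map_zero (mulₗ ε n x)
protected lemma neg_mul (x y : CD n) : mul ε n (-x) y = -mul ε n x y :=
  LinearMap.map_neg₂ (mulₗ ε n) x y
protected lemma mul_neg (x y : CD n) : mul ε n x (-y) = -mul ε n x y := map_neg (mulₗ ε n x) y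

lemma conj_mul (x y : CD n) : conj n (mul ε n x y) = mul ε n (conj n y) (conj n x) := by
  induction n with
  | zero => exact mul_comm (show ℝ from x) y
  | succ n ih =>
    exact ext (by simp [conj_sub, conj_smul, ih, conj_neg, CD.neg_mul, CD.mul_neg])
      (by simp [CD.neg_mul, add_comm])

end CD

open scoped symmDiff

lemma Finset.erase_symmDiff {ι : Type*} [DecidableEq ι] (s t : Finset ι) (a : ι) :
    (s ∆ t).erase a = s.erase a ∆ t.erase a := by
  ext
  simp only [Finset.mem_erase, Finset.mem_symmDiff]
  tauto

namespace CD

variable {n : ℕ} {α β γ : Finset ℕ} {x y b c d : CD n}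

-- Not `mul1 _`: lemmas about `mul ε` do not rewrite through that abbreviation.
local infixl:70 " ⋆ " => CD.mul (fun _ => 1) _

lemma basis_succ_of_mem (h : n + 1 ∈ α) :
    basis (n + 1) α = mk 0 (basis n (α.erase (n + 1))) := if_pos h

lemma basis_succ_of_notMem (h : n + 1 ∉ α) : basis (n + 1) α = mk (basis n α) 0 :=
  if_neg h

lemma basis_ne_zero (n : ℕ) (α : Finset ℕ) : basis n α ≠ 0 := by
  induction n generalizing α with
  | zero => exact one_ne_zero (α := ℝ)
  | succ n ih =>
    by_cases h : n + 1 ∈ α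
    · rw [basis_succ_of_mem h]
      exact fun h0 => ih _ (congrArg Prod.snd h0)
    · rw [basis_succ_of_notMem h]
      exact fun h0 => ih _ (congrArg Prod.fst h0)

def IsSignedBasis (n : ℕ) (α : Finset ℕ) (x : CD n) : Prop :=
  x = basis n α ∨ x = -basis n α

lemma isSignedBasis_basis (n : ℕ) (α : Finset ℕ) : IsSignedBasis n α (basis n α) := Or.inl rfl

lemma IsSignedBasis.neg (hx : IsSignedBasis n α x) : IsSignedBasis n α (-x) := by
  rcases hx with rfl | rfl
  exacts [Or.inr rfl, Or.inl (neg_neg _)]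

lemma IsSignedBasis.mk_zero (h : n + 1 ∉ α) (hx : IsSignedBasis n α x) :
    IsSignedBasis (n + 1) α (mk x 0) := by
  rcases hx with rfl | rfl
  · exact Or.inl (basis_succ_of_notMem h).symm
  · exact Or.inr (by rw [basis_succ_of_notMem h]; exact ext rfl neg_zero.symm)

lemma IsSignedBasis.zero_mk (h : n + 1 ∈ α) (hx : IsSignedBasis n (α.erase (n + 1)) x) :
    IsSignedBasis (n + 1) α (mk 0 x) := by
  rcases hx with rfl | rfl
  · exact Or.inl (basis_succ_of_mem h).symm
  · exact Or.inr (by rw [basis_succ_of_mem h]; exact ext neg_zero.symm rfl)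

lemma isSignedBasis_conj_basis (n : ℕ) (α : Finset ℕ) : IsSignedBasis n α (conj n (basis n α)) := by
  induction n with
  | zero => exact Or.inl rfl
  | succ n ih =>
    by_cases h : n + 1 ∈ α
    · rw [basis_succ_of_mem h, conj_mk, conj_zero]
      exact (isSignedBasis_basis _ _).neg.zero_mk h
    · rw [basis_succ_of_notMem h, conj_mk, neg_zero]
      exact ih.mk_zero h

lemma IsSignedBasis.conj (hx : IsSignedBasis n α x) : IsSignedBasis n α (conj n x) := by
  rcases hx with rfl | rfl
  exacts [isSignedBasis_conj_basis n α, conj_neg (basis n α) ▸ (isSignedBasis_conj_basis n α).neg]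

lemma IsSignedBasis.mul_of_basis (h : ∀ α β, IsSignedBasis n (α ∆ β) (basis n α ⋆ basis n β))
    (hx : IsSignedBasis n α x) (hy : IsSignedBasis n β y) : IsSignedBasis n (α ∆ β) (x ⋆ y) := by
  rcases hx with rfl | rfl <;> rcases hy with rfl | rfl
  · exact h α β
  · exact CD.mul_neg _ _ ▸ (h α β).neg
  · exact CD.neg_mul _ _ ▸ (h α β).neg
  · rw [CD.neg_mul, CD.mul_neg, neg_neg]
    exact h α β

lemma isSignedBasis_basis_mul_basis (n : ℕ) (α β : Finset ℕ) :
    IsSignedBasis n (α ∆ β) (basis n α ⋆ basis n β) := by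
  induction n generalizing α β with
  | zero => exact Or.inl (mul_one (1 : ℝ))
  | succ n ih =>
    have hb := isSignedBasis_basis n
    by_cases hα : n + 1 ∈ α <;> by_cases hβ : n + 1 ∈ β
    · rw [basis_succ_of_mem hα, basis_succ_of_mem hβ, mk_mul_mk]
      simp only [CD.mul_zero, conj_zero, one_smul, zero_sub, add_zero]
      have hk : n + 1 ∉ α ∆ β := by simp [Finset.mem_symmDiff, hα, hβ]
      refine IsSignedBasis.mk_zero hk ?_
      rw [← Finset.erase_eq_of_notMem hk, Finset.erase_symmDiff, symmDiff_comm]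
      exact (IsSignedBasis.mul_of_basis ih (hb _).conj (hb _)).neg
    · rw [basis_succ_of_mem hα, basis_succ_of_notMem hβ, mk_mul_mk]
      simp only [CD.zero_mul, CD.mul_zero, conj_zero, smul_zero, sub_zero, zero_add]
      refine IsSignedBasis.zero_mk (by simp [Finset.mem_symmDiff, hα, hβ]) ?_
      rw [Finset.erase_symmDiff, Finset.erase_eq_of_notMem hβ]
      exact IsSignedBasis.mul_of_basis ih (hb _) (hb _).conj
    · rw [basis_succ_of_notMem hα, basis_succ_of_mem hβ, mk_mul_mk]
      simp only [CD.mul_zero, conj_zero, smul_zero, sub_zero, add_zero]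
      refine IsSignedBasis.zero_mk (by simp [Finset.mem_symmDiff, hα, hβ]) ?_
      rw [Finset.erase_symmDiff, Finset.erase_eq_of_notMem hα, symmDiff_comm]
      exact ih _ _
    · rw [basis_succ_of_notMem hα, basis_succ_of_notMem hβ, mk_mul_mk]
      simp only [CD.zero_mul, CD.mul_zero, conj_zero, smul_zero, sub_zero, add_zero]
      exact (ih α β).mk_zero (by simp [Finset.mem_symmDiff, hα, hβ])

lemma IsSignedBasis.mul (hx : IsSignedBasis n α x) (hy : IsSignedBasis n β y) :
    IsSignedBasis n (α ∆ β) (x ⋆ y) :=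
  IsSignedBasis.mul_of_basis (isSignedBasis_basis_mul_basis n) hx hy

lemma conj_mul_mul_of_mul_conj_mul {a : CD n} (ha : conj n a = a ∨ conj n a = -a)
    (h : ∀ x, a ⋆ (conj n a ⋆ x) = x) (x : CD n) : conj n a ⋆ (a ⋆ x) = x := by
  rcases ha with ha | ha <;> rw [ha] at h ⊢
  · exact h x
  · simpa [CD.neg_mul, CD.mul_neg] using h x

lemma mul_conj_mul_of_mul_conj_mul {a : CD n} (ha : conj n a = a ∨ conj n a = -a)
    (h : ∀ x, a ⋆ (conj n a ⋆ x) = x) (x : CD n) : x ⋆ conj n a ⋆ a = x := by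
  simpa [conj_mul] using congrArg (conj n) (conj_mul_mul_of_mul_conj_mul ha h (conj n x))

lemma basis_mul_conj_basis_mul (n : ℕ) (α : Finset ℕ) (x : CD n) :
    basis n α ⋆ (conj n (basis n α) ⋆ x) = x := by
  induction n generalizing α with
  | zero => exact (one_mul _).trans (one_mul (show ℝ from x))
  | succ n ih =>
    have ih_right (β : Finset ℕ) :=
      mul_conj_mul_of_mul_conj_mul (isSignedBasis_conj_basis n β) (ih β)
    by_cases h : n + 1 ∈ α
    · rw [basis_succ_of_mem h]
      apply ext <;>
        simp [conj_zero, conj_neg, conj_mul, CD.zero_mul, CD.mul_zero, CD.neg_mul, CD.mul_neg, ih,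
          ih_right]
    · rw [basis_succ_of_notMem h]
      apply ext <;> simp [CD.zero_mul, CD.mul_zero, ih, ih_right]

lemma IsPure.of_succ_of_notMem (h : IsPure (n + 1) α) (hn : n + 1 ∉ α) : IsPure n α := by
  refine ⟨h.1, fun a ha => ?_⟩
  have := Finset.mem_Icc.1 (h.2 ha)
  have : a ≠ n + 1 := fun e => hn (e ▸ ha)
  exact Finset.mem_Icc.2 (by omega)

lemma IsPure.symmDiff (hα : IsPure n α) (hβ : IsPure n β) (h : α ≠ β) : IsPure n (α ∆ β) :=
  ⟨Finset.symmDiff_nonempty.2 h, Finset.symmDiff_subset_union.trans (Finset.union_subset hα.2 hβ.2)⟩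

lemma conj_basis_of_isPure (h : IsPure n α) : conj n (basis n α) = -basis n α := by
  induction n with
  | zero =>
    obtain ⟨a, ha⟩ := h.1
    have := Finset.mem_Icc.1 (h.2 ha)
    omega
  | succ n ih =>
    by_cases hn : n + 1 ∈ α
    · rw [basis_succ_of_mem hn]
      exact ext (by simp [conj_zero]) rfl
    · rw [basis_succ_of_notMem hn]
      exact ext (by simp [ih (h.of_succ_of_notMem hn)]) (by simp)

lemma IsSignedBasis.conj_eq_neg (hx : IsSignedBasis n α x) (hα : IsPure n α) :
    CD.conj n x = -x := by
  rcases hx with rfl | rfl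
  · exact conj_basis_of_isPure hα
  · rw [conj_neg, conj_basis_of_isPure hα]

lemma IsSignedBasis.mul_mul_left (hx : IsSignedBasis n α x) (hα : IsPure n α) (y : CD n) :
    x ⋆ (x ⋆ y) = -y := by
  have h := basis_mul_conj_basis_mul n α y
  rw [conj_basis_of_isPure hα, CD.neg_mul, CD.mul_neg, neg_eq_iff_eq_neg] at h
  rcases hx with rfl | rfl
  · exact h
  · simp only [CD.neg_mul, CD.mul_neg, neg_neg, h]

lemma IsSignedBasis.mul_mul_right (hx : IsSignedBasis n α x) (hα : IsPure n α) (y : CD n) :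
    y ⋆ x ⋆ x = -y := by
  have h := mul_conj_mul_of_mul_conj_mul (isSignedBasis_conj_basis n α)
    (basis_mul_conj_basis_mul n α) y
  rw [conj_basis_of_isPure hα, CD.mul_neg, CD.neg_mul, neg_eq_iff_eq_neg] at h
  rcases hx with rfl | rfl
  · exact h
  · simp only [CD.neg_mul, CD.mul_neg, neg_neg, h]

lemma IsSignedBasis.mul_eq_zero_iff_left (hx : IsSignedBasis n α x) (hα : IsPure n α) :
    x ⋆ y = 0 ↔ y = 0 := by
  refine ⟨fun h => ?_, fun h => by rw [h, CD.mul_zero]⟩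
  rw [← neg_eq_zero, ← hx.mul_mul_left hα, h, CD.mul_zero]

lemma IsSignedBasis.mul_eq_zero_iff_right (hx : IsSignedBasis n α x) (hα : IsPure n α) :
    y ⋆ x = 0 ↔ y = 0 := by
  refine ⟨fun h => ?_, fun h => by rw [h, CD.zero_mul]⟩
  rw [← neg_eq_zero, ← hx.mul_mul_right hα, h, CD.zero_mul]

lemma IsSignedBasis.mul_anticomm (hx : IsSignedBasis n α x) (hy : IsSignedBasis n β y)
    (hα : IsPure n α) (hβ : IsPure n β) (h : α ≠ β) : x ⋆ y = -(y ⋆ x) := by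
  have := (hy.mul hx).conj_eq_neg (hβ.symmDiff hα h.symm)
  rwa [conj_mul, hx.conj_eq_neg hα, hy.conj_eq_neg hβ, CD.neg_mul, CD.mul_neg, neg_neg] at this

lemma IsSignedBasis.add_eq_zero_iff_ne (hx : IsSignedBasis n α x) (hy : IsSignedBasis n α y) :
    x + y = 0 ↔ x ≠ y := by
  have hne : basis n α ≠ -basis n α := by
    rw [Ne, eq_neg_iff_add_eq_zero, ← two_smul ℝ]
    exact smul_ne_zero two_ne_zero (basis_ne_zero n α)
  rcases hx with rfl | rfl <;> rcases hy with rfl | rfl <;>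
    simp [hne, hne.symm, ← eq_neg_iff_add_eq_zero]

lemma IsTriad.symmDiff_ne (h : IsTriad n α β γ) : α ∆ β ≠ γ := by
  obtain ⟨-, -, -, -, -, -, hne, hne_neg⟩ := h
  rintro rfl
  rcases isSignedBasis_basis_mul_basis n α β with e | e
  · exact hne e.symm
  · exact hne_neg (by rw [e, neg_neg])

theorem IsTriad.moufang_left_iff (h : IsTriad n α β γ) (hb : IsSignedBasis n α b)
    (hc : IsSignedBasis n β c) (hd : IsSignedBasis n γ d) :
    d ⋆ (b ⋆ (d ⋆ c)) = d ⋆ b ⋆ d ⋆ c ↔ assoc (fun _ => 1) n b c d ≠ 0 := by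
  have hαβγ := h.symmDiff_ne
  obtain ⟨hα, hβ, hγ, hαβ, hαγ, hβγ, -, -⟩ := h
  have hbc := hb.mul hc
  have hu : IsSignedBasis n (α ∆ β ∆ γ) (b ⋆ c ⋆ d) := hbc.mul hd
  have hv : IsSignedBasis n (α ∆ β ∆ γ) (b ⋆ (c ⋆ d)) := by
    rw [symmDiff_assoc]
    exact hb.mul (hc.mul hd)
  have lhs : d ⋆ (b ⋆ (d ⋆ c)) = -(d ⋆ (b ⋆ (c ⋆ d))) := by
    rw [hd.mul_anticomm hc hγ hβ hβγ.symm, CD.mul_neg, CD.mul_neg]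
  have rhs : d ⋆ b ⋆ d ⋆ c = b ⋆ c := by
    rw [hd.mul_anticomm hb hγ hα hαγ.symm, CD.neg_mul, hd.mul_mul_right hγ, neg_neg]
  have hu_d : d ⋆ (b ⋆ c ⋆ d) = b ⋆ c := by
    rw [hbc.mul_anticomm hd (hα.symmDiff hβ hαβ) hγ hαβγ, CD.mul_neg, hd.mul_mul_left hγ,
      neg_neg]
  rw [lhs, rhs, ← hu_d, neg_eq_iff_add_eq_zero, ← CD.mul_add, hd.mul_eq_zero_iff_left hγ,
    hv.add_eq_zero_iff_ne hu, assoc, sub_ne_zero, ne_comm]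

theorem IsTriad.moufang_right_iff (h : IsTriad n α β γ) (hb : IsSignedBasis n α b)
    (hc : IsSignedBasis n β c) (hd : IsSignedBasis n γ d) :
    b ⋆ (d ⋆ (c ⋆ d)) = b ⋆ d ⋆ c ⋆ d ↔ assoc (fun _ => 1) n c b d ≠ 0 := by
  have hαγβ : α ∆ γ ≠ β := fun e => h.symmDiff_ne (by rw [← e, symmDiff_symmDiff_cancel_left])
  obtain ⟨hα, hβ, hγ, hαβ, hαγ, hβγ, -, -⟩ := h
  have hu : IsSignedBasis n (β ∆ α ∆ γ) (c ⋆ b ⋆ d) := (hc.mul hb).mul hd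
  have hv : IsSignedBasis n (β ∆ α ∆ γ) (c ⋆ (b ⋆ d)) := by
    rw [symmDiff_assoc]
    exact hc.mul (hb.mul hd)
  have lhs : b ⋆ (d ⋆ (c ⋆ d)) = b ⋆ c := by
    rw [hc.mul_anticomm hd hβ hγ hβγ, CD.mul_neg, hd.mul_mul_left hγ, neg_neg]
  have rhs : b ⋆ d ⋆ c ⋆ d = -(c ⋆ (b ⋆ d) ⋆ d) := by
    rw [(hb.mul hd).mul_anticomm hc (hα.symmDiff hγ hαγ) hβ hαγβ, CD.neg_mul]
  have hu_d : c ⋆ b ⋆ d ⋆ d = b ⋆ c := by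
    rw [hd.mul_mul_right hγ, hc.mul_anticomm hb hβ hα hαβ.symm, neg_neg]
  rw [lhs, rhs, ← hu_d, eq_neg_iff_add_eq_zero, ← CD.add_mul, hd.mul_eq_zero_iff_right hγ,
    hu.add_eq_zero_iff_ne hv, assoc, sub_ne_zero]

end CD

/-- (Moufang associativity.) For a triad `(b,c,d)`:
`d·(b·(d·c)) = ((d·b)·d)·c ↔ [b,c,d] ≠ 0`, and
`b·(d·(c·d)) = ((b·d)·c)·d ↔ [c,b,d] ≠ 0`. -/
theorem stmt9 (n : ℕ) (α β γ : Finset ℕ) (h : CD.IsTriad n α β γ)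
    (b c d : CD n) (hb : b = CD.basis n α) (hc : c = CD.basis n β)
    (hd : d = CD.basis n γ) :
    (CD.mul1 n d (CD.mul1 n b (CD.mul1 n d c))
        = CD.mul1 n (CD.mul1 n (CD.mul1 n d b) d) c ↔ CD.assoc1 n b c d ≠ 0) ∧
    (CD.mul1 n b (CD.mul1 n d (CD.mul1 n c d))
        = CD.mul1 n (CD.mul1 n (CD.mul1 n b d) c) d ↔ CD.assoc1 n c b d ≠ 0) :=
  ⟨h.moufang_left_iff (Or.inl hb) (Or.inl hc) (Or.inl hd),
    h.moufang_right_iff (Or.inl hb) (Or.inl hc) (Or.inl hd)⟩
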